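/- arXiv:2506.17817 — 2 statements merged into one kernel-verified Lean document; each statement's English description precedes it below -/
import Mathlib

section
/- Let Ψ : ℝ^d → ℝ^M (with M ≥ d) be differentiable at x ∈ ℝ^d and satisfy the coordinate condition Ψ(y)_i = y_i for all i ∈ {1, …, d} and all y, and let W_c ∈ ℝ^{M×M} be the block-diagonal matrix diag(I_d, 0). Then for every v ∈ ℝ^d, the tangent vector η := DΨ(x) v satisfies ηᵀ W_c η = ‖v‖₂². In particular ηᵀ W_c η > 0 whenever v ≠ 0, so the bilinear form (η₁, η₂) ↦ η₁ᵀ W_c η₂ is positive definite on the range of DΨ(x). -/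
open Matrix

/-!
The quadratic form of `diag(I_d, 0)` only sees the first `d` entries of `η = DΨ(x) v`, and
differentiating the coordinate condition `Ψ(y)_i = y_i` shows that these entries are exactly `v`.
So `ηᵀ W_c η = ‖v‖²`.
-/

theorem HasFDerivAt.clm_apply_eq_of_forall_clm_apply_eq
    {E F G : Type*} [NormedAddCommGroup E] [NormedSpace ℝ E] [NormedAddCommGroup F]
    [NormedSpace ℝ F] [NormedAddCommGroup G] [NormedSpace ℝ G]
    {f : E → F} {f' : E →L[ℝ] F} {x : E} (hf : HasFDerivAt f f' x)
    {L : F →L[ℝ] G} {A : E →L[ℝ] G} (h : ∀ y, L (f y) = A y) (v : E) :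
    L (f' v) = A v := by
  have hLf : HasFDerivAt (fun y => L (f y)) (L.comp f') x := L.hasFDerivAt.comp x hf
  simp only [h] at hLf
  exact DFunLike.congr_fun (hLf.unique A.hasFDerivAt) v

theorem HasFDerivAt.apply_castLE_eq_of_forall_apply_castLE_eq {d M : ℕ} (hdM : d ≤ M)
    {Ψ : (Fin d → ℝ) → (Fin M → ℝ)} {D : (Fin d → ℝ) →L[ℝ] (Fin M → ℝ)} {x : Fin d → ℝ}
    (hD : HasFDerivAt Ψ D x)
    (hcoord : ∀ (y : Fin d → ℝ) (i : Fin d), Ψ y (Fin.castLE hdM i) = y i)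
    (v : Fin d → ℝ) (i : Fin d) :
    D v (Fin.castLE hdM i) = v i :=
  hD.clm_apply_eq_of_forall_clm_apply_eq (L := ContinuousLinearMap.proj (Fin.castLE hdM i))
    (A := ContinuousLinearMap.proj i) (fun y => hcoord y i) v

theorem Matrix.dotProduct_diagonal_mulVec {n R : Type*} [Fintype n] [DecidableEq n]
    [CommSemiring R] (c w : n → R) : w ⬝ᵥ diagonal c *ᵥ w = ∑ i, c i * w i ^ 2 := by
  simp only [dotProduct, mulVec_diagonal]
  exact Finset.sum_congr rfl fun i _ => by ring

theorem Fin.sum_ite_val_lt {β : Type*} [AddCommMonoid β] {d M : ℕ} (hdM : d ≤ M)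
    (f : Fin M → β) :
    ∑ j : Fin M, (if (j : ℕ) < d then f j else 0) = ∑ i : Fin d, f (Fin.castLE hdM i) := by
  have himage : Finset.univ.filter (fun j : Fin M => (j : ℕ) < d)
      = Finset.univ.map (Fin.castLEEmb hdM) := by
    ext j
    simp only [Finset.mem_filter, Finset.mem_univ, true_and, Finset.mem_map]
    exact ⟨fun hj => ⟨⟨j, hj⟩, rfl⟩, by rintro ⟨i, rfl⟩; exact i.isLt⟩
  rw [← Finset.sum_filter, himage, Finset.sum_map]
  rfl

theorem sum_sq_pos_of_ne_zero {n : Type*} [Fintype n] {v : n → ℝ} (hv : v ≠ 0) :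
    0 < ∑ i, v i ^ 2 := by
  obtain ⟨i, hi⟩ := Function.ne_iff.mp hv
  exact Finset.sum_pos' (fun j _ => sq_nonneg (v j))
    ⟨i, Finset.mem_univ i, pow_two_pos_of_ne_zero hi⟩

/-- for a dictionary whose first `d` entries are the coordinate
functions, the singular weight `W_c = diag(I_d, 0)` is positive definite on
tangent vectors `η = DΨ(x) v`: indeed `ηᵀ W_c η = ‖v‖₂²`. -/
theorem coordinate_weight_riemannian_metric
    {d M : ℕ} (hdM : d ≤ M)
    (Ψ : (Fin d → ℝ) → (Fin M → ℝ)) (x : Fin d → ℝ)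
    (D : (Fin d → ℝ) →L[ℝ] (Fin M → ℝ)) (hD : HasFDerivAt Ψ D x)
    (hcoord : ∀ (y : Fin d → ℝ) (i : Fin d), Ψ y (Fin.castLE hdM i) = y i)
    (Wc : Matrix (Fin M) (Fin M) ℝ)
    (hWc : Wc = Matrix.diagonal fun i : Fin M => if (i : ℕ) < d then (1 : ℝ) else 0) :
    (∀ v : Fin d → ℝ, (D v) ⬝ᵥ Wc.mulVec (D v) = ∑ i, (v i) ^ 2) ∧
      ∀ v : Fin d → ℝ, v ≠ 0 → 0 < (D v) ⬝ᵥ Wc.mulVec (D v) := by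
  have hform (v : Fin d → ℝ) : (D v) ⬝ᵥ Wc.mulVec (D v) = ∑ i, (v i) ^ 2 := by
    rw [hWc, dotProduct_diagonal_mulVec]
    simp only [ite_mul, one_mul, zero_mul]
    rw [Fin.sum_ite_val_lt hdM]
    simp only [hD.apply_castLE_eq_of_forall_apply_castLE_eq hdM hcoord]
  exact ⟨hform, fun v hv => hform v ▸ sum_sq_pos_of_ne_zero hv⟩
end

section
/- Let f, g₁, …, g_m : ℝ^d → ℝ^d be continuously differentiable vector fields, let p ∈ ℝ^m, let φ : ℝ^d → ℝ be twice continuously differentiable, and let x ∈ ℝ^d. Suppose γ, γ₀, γ₁, …, γ_m : ℝ → ℝ^d are curves defined on a neighbourhood of 0 with γ(0) = γ₀(0) = γ₁(0) = … = γ_m(0) = x satisfying, for all t in that neighbourhood, γ'(t) = f(γ(t)) + ∑_{i=1}^m p_i g_i(γ(t)), γ₀'(t) = f(γ₀(t)), and γᵢ'(t) = gᵢ(γᵢ(t)) for i = 1, …, m. Then the function t ↦ φ(γ(t)) − φ(γ₀(t)) − ∑_{i=1}^m p_i (φ(γᵢ(t)) − φ(x)) is O(t²) as t → 0; i.e.,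 there exist C > 0 and δ > 0 such that |φ(γ(t)) − φ(γ₀(t)) − ∑_{i=1}^m p_i (φ(γᵢ(t)) − φ(x))| ≤ C t² for all |t| ≤ δ. -/
open Matrix

/-- Taylor-series argument showing that the Koopman operator of a
parameter-affine system is approximately parameter-affine:
`φ(γ(t)) − φ(γ₀(t)) − ∑ᵢ pᵢ (φ(γᵢ(t)) − φ(x)) = O(t²)` as `t → 0`. -/
theorem parameter_affine_koopman_taylor
    {d m : ℕ}
    (f : (Fin d → ℝ) → (Fin d → ℝ)) (g : Fin m → (Fin d → ℝ) → (Fin d → ℝ))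
    (hf : ContDiff ℝ 1 f) (hg : ∀ i, ContDiff ℝ 1 (g i))
    (p : Fin m → ℝ)
    (φ : (Fin d → ℝ) → ℝ) (hφ : ContDiff ℝ 2 φ)
    (x : Fin d → ℝ)
    (γ γ₀ : ℝ → (Fin d → ℝ)) (γs : Fin m → ℝ → (Fin d → ℝ))
    (ε : ℝ) (hε : 0 < ε)
    (hγ0 : γ 0 = x) (hγ₀0 : γ₀ 0 = x) (hγs0 : ∀ i, γs i 0 = x)
    (hγ' : ∀ t ∈ Set.Ioo (-ε) ε,
      HasDerivAt γ (f (γ t) + ∑ i, p i • g i (γ t)) t)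
    (hγ₀' : ∀ t ∈ Set.Ioo (-ε) ε, HasDerivAt γ₀ (f (γ₀ t)) t)
    (hγs' : ∀ i, ∀ t ∈ Set.Ioo (-ε) ε, HasDerivAt (γs i) (g i (γs i t)) t) :
    ∃ C > 0, ∃ δ > 0, ∀ t : ℝ, |t| ≤ δ →
      |φ (γ t) - φ (γ₀ t) - ∑ i, p i * (φ (γs i t) - φ x)| ≤ C * t ^ 2 := by
  have hφ1 : Differentiable ℝ φ := hφ.differentiable two_ne_zero
  set v : ℝ → (Fin d → ℝ) := fun t => f (γ t) + ∑ i, p i • g i (γ t) with hv_def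
  set F : ℝ → ℝ := fun t => φ (γ t) - φ (γ₀ t) - ∑ i, p i * (φ (γs i t) - φ x) with hF_def
  set F' : ℝ → ℝ := fun t =>
    (fderiv ℝ φ (γ t)) (v t) - (fderiv ℝ φ (γ₀ t)) (f (γ₀ t))
      - ∑ i, p i * (fderiv ℝ φ (γs i t)) (g i (γs i t)) with hF'_def
  have h0mem : (0 : ℝ) ∈ Set.Ioo (-ε) ε := ⟨neg_lt_zero.mpr hε, hε⟩
  -- F has derivative F' on the interval
  have hF : ∀ t ∈ Set.Ioo (-ε) ε, HasDerivAt F (F' t) t := by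
    intro t ht
    have h1 : HasDerivAt (fun s => φ (γ s)) ((fderiv ℝ φ (γ t)) (v t)) t :=
      (hφ1 (γ t)).hasFDerivAt.comp_hasDerivAt t (hγ' t ht)
    have h2 : HasDerivAt (fun s => φ (γ₀ s)) ((fderiv ℝ φ (γ₀ t)) (f (γ₀ t))) t :=
      (hφ1 (γ₀ t)).hasFDerivAt.comp_hasDerivAt t (hγ₀' t ht)
    have h3 : ∀ i, HasDerivAt (fun s => p i * (φ (γs i s) - φ x))
        (p i * (fderiv ℝ φ (γs i t)) (g i (γs i t))) t := fun i =>
      (((hφ1 (γs i t)).hasFDerivAt.comp_hasDerivAt t (hγs' i t ht)).sub_const _).const_mul _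
    exact (h1.sub h2).sub (HasDerivAt.fun_sum fun i _ => h3 i)
  -- F' vanishes at 0
  have hF'0 : F' 0 = 0 := by
    simp only [hF'_def, hv_def, hγ0, hγ₀0, hγs0, map_add, map_sum, _root_.map_smul, smul_eq_mul]
    ring
  -- F' is differentiable at 0
  have hγd : HasDerivAt γ (v 0) 0 := hγ' 0 h0mem
  have hdφ : ContDiff ℝ 1 (fderiv ℝ φ) := hφ.fderiv_right (by norm_num)
  have hγdiff : DifferentiableAt ℝ γ 0 := hγd.differentiableAt
  have hvdiff : DifferentiableAt ℝ v 0 := by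
    refine DifferentiableAt.add ?_ ?_
    · exact ((hf.differentiable one_ne_zero) (γ 0)).comp 0 hγdiff
    · exact DifferentiableAt.fun_sum fun i _ =>
        ((((hg i).differentiable one_ne_zero) (γ 0)).comp 0 hγdiff).const_smul (p i)
  have hF'diff : DifferentiableAt ℝ F' 0 := by
    have hc : DifferentiableAt ℝ (fun t => fderiv ℝ φ (γ t)) 0 :=
      ((hdφ.differentiable one_ne_zero) (γ 0)).comp 0 hγdiff
    have t1 : DifferentiableAt ℝ (fun t => (fderiv ℝ φ (γ t)) (v t)) 0 := hc.clm_apply hvdiff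
    have hγ₀diff : DifferentiableAt ℝ γ₀ 0 := (hγ₀' 0 h0mem).differentiableAt
    have t2 : DifferentiableAt ℝ (fun t => (fderiv ℝ φ (γ₀ t)) (f (γ₀ t))) 0 :=
      (((hdφ.differentiable one_ne_zero) (γ₀ 0)).comp 0 hγ₀diff).clm_apply
        (((hf.differentiable one_ne_zero) (γ₀ 0)).comp 0 hγ₀diff)
    have t3 : ∀ i : Fin m,
        DifferentiableAt ℝ (fun t => p i * (fderiv ℝ φ (γs i t)) (g i (γs i t))) 0 := by
      intro i
      have hγsdiff : DifferentiableAt ℝ (γs i) 0 := (hγs' i 0 h0mem).differentiableAt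
      exact ((((hdφ.differentiable one_ne_zero) (γs i 0)).comp 0 hγsdiff).clm_apply
        ((((hg i).differentiable one_ne_zero) (γs i 0)).comp 0 hγsdiff)).const_mul (p i)
    exact (t1.sub t2).sub (DifferentiableAt.fun_sum fun i _ => t3 i)
  set A : ℝ := deriv F' 0 with hA_def
  have hA : HasDerivAt F' A 0 := hF'diff.hasDerivAt
  -- near 0, |F' t| ≤ (|A| + 1) * |t|
  have hlo := (hasDerivAt_iff_isLittleO.mp hA).def one_pos
  rw [Metric.eventually_nhds_iff] at hlo
  obtain ⟨δ₀, hδ₀, hbound⟩ := hlo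
  set K : ℝ := |A| + 1 with hK_def
  have hKpos : 0 < K := by positivity
  set δ : ℝ := min (δ₀ / 2) (ε / 2) with hδ_def
  have hδpos : 0 < δ := lt_min (by linarith) (by linarith)
  refine ⟨K, hKpos, δ, hδpos, ?_⟩
  intro t ht
  have hF'bound : ∀ s : ℝ, |s| ≤ δ → |F' s| ≤ K * |s| := by
    intro s hs
    have hsδ₀ : dist s 0 < δ₀ := by
      rw [Real.dist_eq, sub_zero]
      calc |s| ≤ δ := hs
        _ ≤ δ₀ / 2 := min_le_left _ _
        _ < δ₀ := by linarith
    have := hbound hsδ₀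
    simp only [hF'0, sub_zero, zero_sub] at this
    have h1 : ‖F' s - (s - 0) • A‖ ≤ 1 * ‖s - 0‖ := by
      simpa using this
    simp only [sub_zero, smul_eq_mul, one_mul, Real.norm_eq_abs] at h1
    calc |F' s| = |(F' s - s * A) + s * A| := by ring_nf
      _ ≤ |F' s - s * A| + |s * A| := abs_add_le _ _
      _ ≤ |s| + |s| * |A| := by rw [abs_mul]; exact add_le_add h1 (le_of_eq rfl)
      _ = K * |s| := by rw [hK_def]; ring
  -- Mean value inequality on uIcc 0 t
  have habs : ∀ s ∈ Set.uIcc 0 t, |s| ≤ |t| := by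
    intro s hs
    rw [Set.mem_uIcc] at hs
    have h1 := le_abs_self t
    have h2 := neg_abs_le t
    rcases hs with ⟨ha, hb⟩ | ⟨ha, hb⟩ <;> rw [abs_le] <;> constructor <;> linarith
  have hsub : Set.uIcc 0 t ⊆ Set.Ioo (-ε) ε := by
    intro s hs
    have := habs s hs
    have h3 : |s| ≤ ε / 2 := le_trans this (le_trans ht (min_le_right _ _))
    rw [abs_le] at h3
    constructor <;> [linarith; linarith]
  have hmvt : ‖F t - F 0‖ ≤ (K * |t|) * ‖t - 0‖ := by
    refine Convex.norm_image_sub_le_of_norm_hasDerivWithin_le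
      (fun s hs => (hF s (hsub hs)).hasDerivWithinAt) ?_ (convex_uIcc 0 t)
      Set.left_mem_uIcc Set.right_mem_uIcc
    intro s hs
    have h1 : |F' s| ≤ K * |s| := hF'bound s (le_trans (habs s hs) ht)
    calc ‖F' s‖ = |F' s| := rfl
      _ ≤ K * |s| := h1
      _ ≤ K * |t| := by nlinarith [habs s hs, hKpos]
  have hF0 : F 0 = 0 := by
    simp [hF_def, hγ0, hγ₀0, hγs0]
  rw [hF0, sub_zero, sub_zero, Real.norm_eq_abs, Real.norm_eq_abs] at hmvt
  calc |F t| ≤ K * |t| * |t| := hmvt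
    _ = K * t ^ 2 := by rw [mul_assoc, abs_mul_abs_self, sq]
end
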